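/- arXiv:math-ph/0602038 — 3 statements merged into one kernel-verified Lean document; each statement's English description precedes it below -/
import Mathlib

section
/- Let L : ℝ^k × ℝ^n × ℝ^{nk} → ℝ be smooth and let Z = (Z_1, …, Z_k) be a k-vector field on the unified space M = ℝ^k × ℝ^n × ℝ^{nk} × ℝ^{nk}, Z_A = (Z_A)^B ∂/∂t^B + (Z_A)^i ∂/∂q^i + (Z_A)^i_B ∂/∂v^i_B + (Z_A)^B_i ∂/∂p^B_i, whose coefficients satisfy at every point of M_L: (Z_A)^B = δ^B_A, (Z_A)^i = v^i_A, and Σ_{A=1}^k (Z_A)^A_i = ∂L/∂q^i. Let ψ : ℝ^k → M be an integral section of Z taking values in M_L, written ψ(t) = (ψ^A(t), ψ^i(t), ψ^i_A(t), ψ^A_i(t)), and set ψ_L(t) = (ψ^A(t), ψ^i(t), ψ^i_A(t)). Then there are constants c^A with ψ^A(t) = t^A + c^A, moreover ψ^i_A(t) = ∂ψ^i/∂t^A(t), ψ^A_i(t) = (∂L/∂v^i_A)(ψ_L(t)), and Σ_{A=1}^k ∂/∂t^A[(∂L/∂v^i_A)(ψ_L(t))] = (∂L/∂q^i)(ψ_L(t))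 for all i and t. -/
noncomputable section

/-- The Lagrangian phase space `ℝ^k × ℝ^n × ℝ^{nk}` with coordinates `(t^A, q^i, v^i_A)`. -/
abbrev Phase (k n : ℕ) : Type :=
  (Fin k → ℝ) × (Fin n → ℝ) × (Fin n → Fin k → ℝ)

/-- The unified (Skinner–Rusk) space `M = ℝ^k × ℝ^n × ℝ^{nk} × ℝ^{nk}` with
coordinates `(t^A, q^i, v^i_A, p^A_i)`. -/
abbrev USpace (k n : ℕ) : Type :=
  (Fin k → ℝ) × (Fin n → ℝ) × (Fin n → Fin k → ℝ) × (Fin n → Fin k → ℝ)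

/-- Partial derivative `∂f/∂t^A` of a function on `ℝ^k`. -/
def pdR {k : ℕ} (A : Fin k) (f : (Fin k → ℝ) → ℝ) (t : Fin k → ℝ) : ℝ :=
  fderiv ℝ f t (Pi.single A 1)

/-- Partial derivative `∂f/∂q^i` on the Lagrangian phase space. -/
def pdq {k n : ℕ} (i : Fin n) (f : Phase k n → ℝ) (p : Phase k n) : ℝ :=
  fderiv ℝ f p (0, Pi.single i 1, 0)

/-- Partial derivative `∂f/∂v^i_A` on the Lagrangian phase space. -/
def pdv {k n : ℕ} (i : Fin n) (A : Fin k) (f : Phase k n → ℝ) (p : Phase k n) : ℝ :=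
  fderiv ℝ f p (0, 0, Pi.single i (Pi.single A 1))

/-- Projection of the unified space onto the Lagrangian phase space. -/
def lagPr {k n : ℕ} (m : USpace k n) : Phase k n := (m.1, m.2.1, m.2.2.1)

/-- The graph `M_L` of the Legendre map: `p^A_i = ∂L/∂v^i_A(t, q, v)`. -/
def MSet {k n : ℕ} (L : Phase k n → ℝ) : Set (USpace k n) :=
  {m | ∀ (i : Fin n) (A : Fin k), m.2.2.2 i A = pdv i A L (lagPr m)}

/-- `ψ` is an integral section of the `k`-vector field `Z` on the unified space. -/
def IsIntegralSectionU {k n : ℕ} (Z : Fin k → USpace k n → USpace k n)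
    (ψ : (Fin k → ℝ) → USpace k n) : Prop :=
  ∀ t A, fderiv ℝ ψ t (Pi.single A 1) = Z A (ψ t)


/-!
Along an integral section `ψ` of `Z` every coordinate of `ψ` differentiates, by the chain rule for
the coordinate functionals, into the corresponding coefficient of `Z`. Since `ψ` lies in `M_L`,
these coefficients are prescribed there: `∂ψ^B/∂t^A = δ^B_A` integrates to `ψ^B(t) = t^B + c^B`,
`∂ψ^i/∂t^A = ψ^i_A`, and `∂ψ^A_i/∂t^A` sums to `∂L/∂q^i`, which is the Euler–Lagrange equation
once `ψ^A_i = ∂L/∂v^i_A ∘ ψ_L` is substituted.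
-/

section PartialDerivatives

variable {k : ℕ}

theorem fderiv_eq_of_forall_pdR_eq {f g : (Fin k → ℝ) → ℝ} {t : Fin k → ℝ}
    (h : ∀ A, pdR A f t = pdR A g t) : fderiv ℝ f t = fderiv ℝ g t :=
  ContinuousLinearMap.coe_injective <| LinearMap.pi_ext' fun A => LinearMap.ext_ring (h A)

theorem exists_eq_add_const_of_forall_pdR_eq {f g : (Fin k → ℝ) → ℝ}
    (hf : Differentiable ℝ f) (hg : Differentiable ℝ g) (h : ∀ t A, pdR A f t = pdR A g t) :
    ∃ c, ∀ t, f t = g t + c := by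
  obtain ⟨c, hc⟩ := isOpen_univ.exists_eq_add_of_fderiv_eq isPreconnected_univ
    hf.differentiableOn hg.differentiableOn fun t _ => fderiv_eq_of_forall_pdR_eq (h t)
  exact ⟨c, fun t => hc (Set.mem_univ t)⟩

theorem pdR_apply (A B : Fin k) (t : Fin k → ℝ) :
    pdR A (fun s => s B) t = (Pi.single A 1 : Fin k → ℝ) B := by
  rw [pdR, (hasFDerivAt_apply B t).fderiv]
  rfl

theorem pdR_clm_comp {F : Type*} [NormedAddCommGroup F] [NormedSpace ℝ F] (e : F →L[ℝ] ℝ)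
    {ψ : (Fin k → ℝ) → F} {t : Fin k → ℝ} (hψ : DifferentiableAt ℝ ψ t) (A : Fin k) :
    pdR A (fun s => e (ψ s)) t = e (fderiv ℝ ψ t (Pi.single A 1)) := by
  rw [pdR, fderiv_fun_comp t e.differentiableAt hψ, e.fderiv]
  rfl

end PartialDerivatives

namespace USpace

variable (k n : ℕ)

def tCoord (A : Fin k) : USpace k n →L[ℝ] ℝ :=
  (ContinuousLinearMap.proj (R := ℝ) (φ := fun _ : Fin k => ℝ) A).comp
    (ContinuousLinearMap.fst ℝ _ _)

def qCoord (i : Fin n) : USpace k n →L[ℝ] ℝ :=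
  (ContinuousLinearMap.proj (R := ℝ) (φ := fun _ : Fin n => ℝ) i).comp
    ((ContinuousLinearMap.fst ℝ _ _).comp (ContinuousLinearMap.snd ℝ _ _))

def pCoord (i : Fin n) (A : Fin k) : USpace k n →L[ℝ] ℝ :=
  (ContinuousLinearMap.proj (R := ℝ) (φ := fun _ : Fin k => ℝ) A).comp <|
    (ContinuousLinearMap.proj (R := ℝ) (φ := fun _ : Fin n => Fin k → ℝ) i).comp <|
      (ContinuousLinearMap.snd ℝ _ _).comp <|
        (ContinuousLinearMap.snd ℝ _ _).comp (ContinuousLinearMap.snd ℝ _ _)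

variable {k n}

@[simp] theorem tCoord_apply (A : Fin k) (m : USpace k n) : tCoord k n A m = m.1 A := rfl

@[simp] theorem qCoord_apply (i : Fin n) (m : USpace k n) : qCoord k n i m = m.2.1 i := rfl

@[simp] theorem pCoord_apply (i : Fin n) (A : Fin k) (m : USpace k n) :
    pCoord k n i A m = m.2.2.2 i A := rfl

end USpace

theorem IsIntegralSectionU.pdR_clm_comp {k n : ℕ} {Z : Fin k → USpace k n → USpace k n}
    {ψ : (Fin k → ℝ) → USpace k n} (hint : IsIntegralSectionU Z ψ) (e : USpace k n →L[ℝ] ℝ)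
    {t : Fin k → ℝ} (hψ : DifferentiableAt ℝ ψ t) (A : Fin k) :
    pdR A (fun s => e (ψ s)) t = e (Z A (ψ t)) := by
  rw [_root_.pdR_clm_comp e hψ, hint t A]

theorem stmt8_general {k n : ℕ} (L : Phase k n → ℝ)
    (Z : Fin k → USpace k n → USpace k n)
    (h1 : ∀ A, ∀ m ∈ MSet L, (Z A m).1 = Pi.single A 1)
    (h2 : ∀ A, ∀ m ∈ MSet L, ∀ i : Fin n, (Z A m).2.1 i = m.2.2.1 i A)
    (h3 : ∀ m ∈ MSet L, ∀ i : Fin n, ∑ A, (Z A m).2.2.2 i A = pdq i L (lagPr m))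
    (ψ : (Fin k → ℝ) → USpace k n) (hψ : ContDiff ℝ (⊤ : ℕ∞) ψ)
    (hint : IsIntegralSectionU Z ψ) (hML : ∀ t, ψ t ∈ MSet L) :
    (∃ c : Fin k → ℝ, ∀ t A, (ψ t).1 A = t A + c A) ∧
    (∀ t (i : Fin n) (A : Fin k),
      (ψ t).2.2.1 i A = pdR A (fun s => (ψ s).2.1 i) t) ∧
    (∀ t (i : Fin n) (A : Fin k),
      (ψ t).2.2.2 i A = pdv i A L (lagPr (ψ t))) ∧
    (∀ t (i : Fin n),
      ∑ A, pdR A (fun s => pdv i A L (lagPr (ψ s))) t = pdq i L (lagPr (ψ t))) := by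
  have hdiff : Differentiable ℝ ψ := hψ.differentiable (by simp)
  have hpdR (e : USpace k n →L[ℝ] ℝ) t A := hint.pdR_clm_comp e (hdiff t) A
  refine ⟨?_, fun t i A => ?_, fun t => hML t, fun t i => ?_⟩
  · have hc B := exists_eq_add_const_of_forall_pdR_eq
      ((USpace.tCoord k n B).differentiable.comp hdiff) (differentiable_apply B)
      fun t A => (hpdR (USpace.tCoord k n B) t A).trans <| by
        simp [h1 A (ψ t) (hML t), pdR_apply]
    choose c hc using hc
    exact ⟨c, fun t B => hc B t⟩
  · simpa [h2 A (ψ t) (hML t)] using (hpdR (USpace.qCoord k n i) t A).symm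
  · have hp A : (fun s => pdv i A L (lagPr (ψ s))) = fun s => USpace.pCoord k n i A (ψ s) :=
      funext fun s => (hML s i A).symm
    simp only [hp, hpdR]
    exact h3 (ψ t) (hML t) i

/-- integral sections, valued in `M_L`, of a `k`-vector field `Z` on the
unified space whose components satisfy `(Z_A)^B = δ^B_A`, `(Z_A)^i = v^i_A` and
`Σ_A (Z_A)^A_i = ∂L/∂q^i` on `M_L`, yield solutions of the Euler–Lagrange equations. -/
theorem stmt8 {k n : ℕ} (L : Phase k n → ℝ) (hL : ContDiff ℝ (⊤ : ℕ∞) L)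
    (Z : Fin k → USpace k n → USpace k n) (hZ : ∀ A, ContDiff ℝ (⊤ : ℕ∞) (Z A))
    (h1 : ∀ A, ∀ m ∈ MSet L, (Z A m).1 = Pi.single A 1)
    (h2 : ∀ A, ∀ m ∈ MSet L, ∀ i : Fin n, (Z A m).2.1 i = m.2.2.1 i A)
    (h3 : ∀ m ∈ MSet L, ∀ i : Fin n, ∑ A, (Z A m).2.2.2 i A = pdq i L (lagPr m))
    (ψ : (Fin k → ℝ) → USpace k n) (hψ : ContDiff ℝ (⊤ : ℕ∞) ψ)
    (hint : IsIntegralSectionU Z ψ) (hML : ∀ t, ψ t ∈ MSet L) :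
    (∃ c : Fin k → ℝ, ∀ t A, (ψ t).1 A = t A + c A) ∧
    (∀ t (i : Fin n) (A : Fin k),
      (ψ t).2.2.1 i A = pdR A (fun s => (ψ s).2.1 i) t) ∧
    (∀ t (i : Fin n) (A : Fin k),
      (ψ t).2.2.2 i A = pdv i A L (lagPr (ψ t))) ∧
    (∀ t (i : Fin n),
      ∑ A, pdR A (fun s => pdv i A L (lagPr (ψ s))) t = pdq i L (lagPr (ψ t))) :=
  stmt8_general L Z h1 h2 h3 ψ hψ hint hML
end
end

section
/- Let L : ℝ^k × ℝ^n × ℝ^{nk} → ℝ be smooth, let X = (X_1, …, X_k) be a SOPDE with coefficient functions (X_A)^i_B, and let ψ_L : ℝ^k → ℝ^k × ℝ^n × ℝ^{nk} be an integral section of X. Define ψ^B_j(t) = (∂L/∂v^j_B)(ψ_L(t)). Then for all A, B, j and all t: ∂ψ^B_j/∂t^A(t) = [∂²L/∂t^A∂v^j_B + Σ_i v^i_A · ∂²L/∂q^i∂v^j_B + Σ_{i,C} (X_A)^i_C · ∂²L/∂v^i_C∂v^j_B](ψ_L(t)); consequently ψ = (ψ_L, FL ∘ ψ_L) is an integral section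 of the k-vector field on the unified space whose (t, q, v)-components agree with those of X_A and whose p-components are the bracketed expressions. -/
/-!
By the chain rule, `∂ψ^B_j/∂t^A` is the derivative of `∂L/∂v^j_B` at `ψ_L(t)` in the direction
`∂ψ_L/∂t^A = X_A(ψ_L(t))`. Expanding that direction in the coordinate basis, the SOPDE condition
fixes its `t`- and `q`-components to `δ^B_A` and `v^i_A`, which gives the stated formula; the
integral-section property of `(ψ_L, FL ∘ ψ_L)` is the same identity read off componentwise.
-/

noncomputable section

/-- Partial derivative `∂f/∂t^A` on phase space. -/
def pdt {k n : ℕ} (A : Fin k) (f : Phase k n → ℝ) (p : Phase k n) : ℝ :=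
  fderiv ℝ f p (Pi.single A 1, 0, 0)

/-- `ψ` is an integral section of the `k`-vector field `X = (X_1, …, X_k)`. -/
def IsIntegralSection {k n : ℕ} (X : Fin k → Phase k n → Phase k n)
    (ψ : (Fin k → ℝ) → Phase k n) : Prop :=
  ∀ t A, fderiv ℝ ψ t (Pi.single A 1) = X A (ψ t)

/-- `X` is a second order partial differential equation (SOPDE):
`(X_A)^B = δ^B_A` and `(X_A)^i = v^i_A`. -/
def IsSOPDE {k n : ℕ} (X : Fin k → Phase k n → Phase k n) : Prop :=
  ∀ A p, (X A p).1 = Pi.single A 1 ∧ ∀ i, (X A p).2.1 i = p.2.2 i A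

/-- The Legendre map `FL(t, q, v) = (t, q, ∂L/∂v^i_A(t, q, v))`. -/
def FL {k n : ℕ} (L : Phase k n → ℝ) (p : Phase k n) : Phase k n :=
  (p.1, p.2.1, fun i A => pdv i A L p)

theorem ContinuousLinearMap.apply_phase_eq {k n : ℕ} {F : Type*} [AddCommMonoid F] [Module ℝ F]
    [TopologicalSpace F] (D : Phase k n →L[ℝ] F)
    (u : Fin k → ℝ) (v : Fin n → ℝ) (w : Fin n → Fin k → ℝ) :
    D (u, v, w) = D (u, 0, 0) + ∑ i, v i • D (0, Pi.single i 1, 0)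
      + ∑ C, ∑ i, w i C • D (0, 0, Pi.single i (Pi.single C 1)) := by
  have hdecomp : ((u, v, w) : Phase k n) = (u, 0, 0) + ∑ i, v i • (0, Pi.single i 1, 0)
      + ∑ C, ∑ i, w i C • (0, 0, Pi.single i (Pi.single C 1)) := by
    ext <;> simp [Prod.fst_sum, Prod.snd_sum, Finset.sum_apply, Pi.single_apply]
  rw [hdecomp]
  simp only [map_add, map_sum, map_smul]

theorem IsSOPDE.fderiv_apply {k n : ℕ} {X : Fin k → Phase k n → Phase k n} (hS : IsSOPDE X)
    (f : Phase k n → ℝ) (p : Phase k n) (A : Fin k) :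
    fderiv ℝ f p (X A p) = pdt A f p + ∑ i, p.2.2 i A * pdq i f p
      + ∑ C, ∑ i, (X A p).2.2 i C * pdv i C f p := by
  obtain ⟨hT, hQ⟩ := hS A p
  rw [show X A p = ((X A p).1, (X A p).2.1, (X A p).2.2) from rfl,
    ContinuousLinearMap.apply_phase_eq, hT]
  simp only [hQ, smul_eq_mul]
  rfl

theorem IsIntegralSection.pdR_comp {k n : ℕ} {X : Fin k → Phase k n → Phase k n}
    {ψ : (Fin k → ℝ) → Phase k n} (hint : IsIntegralSection X ψ) {g : Phase k n → ℝ}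
    {t : Fin k → ℝ} (hg : DifferentiableAt ℝ g (ψ t)) (hψ : DifferentiableAt ℝ ψ t) (A : Fin k) :
    pdR A (fun s => g (ψ s)) t = fderiv ℝ g (ψ t) (X A (ψ t)) := by
  rw [pdR, fderiv_fun_comp t hg hψ, ContinuousLinearMap.comp_apply, hint t A]

theorem ContDiff.differentiable_pdv {k n : ℕ} {L : Phase k n → ℝ} (hL : ContDiff ℝ 2 L)
    (i : Fin n) (A : Fin k) : Differentiable ℝ (pdv i A L) :=
  ((hL.fderiv_right (m := 1) (by norm_num)).clm_apply contDiff_const).differentiable one_ne_zero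

theorem fderiv_prodMk_components_apply {E F G H K : Type*} [NormedAddCommGroup E]
    [NormedSpace ℝ E] [NormedAddCommGroup F] [NormedSpace ℝ F] [NormedAddCommGroup G]
    [NormedSpace ℝ G] [NormedAddCommGroup H] [NormedSpace ℝ H] [NormedAddCommGroup K]
    [NormedSpace ℝ K] {ψ : E → F × G × H} {φ : E → K} {t : E}
    (hψ : DifferentiableAt ℝ ψ t) (hφ : DifferentiableAt ℝ φ t) (e : E) :
    fderiv ℝ (fun s => ((ψ s).1, (ψ s).2.1, (ψ s).2.2, φ s)) t e
      = ((fderiv ℝ ψ t e).1, (fderiv ℝ ψ t e).2.1, (fderiv ℝ ψ t e).2.2, fderiv ℝ φ t e) := by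
  have hψ' := hψ.hasFDerivAt
  rw [(hψ'.fst.prodMk (hψ'.snd.fst.prodMk (hψ'.snd.snd.prodMk hφ.hasFDerivAt))).fderiv]
  rfl

theorem fderiv_apply_apply {E ι κ : Type*} [NormedAddCommGroup E] [NormedSpace ℝ E]
    [Fintype ι] [Fintype κ] {φ : E → ι → κ → ℝ} {t : E} (hφ : DifferentiableAt ℝ φ t)
    (e : E) (j : ι) (B : κ) : fderiv ℝ φ t e j B = fderiv ℝ (fun s => φ s j B) t e := by
  rw [fderiv_apply (differentiableAt_pi.1 hφ j) B, fderiv_apply hφ j]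
  rfl

theorem stmt11_general {k n : ℕ} (L : Phase k n → ℝ) (hL : ContDiff ℝ (⊤ : ℕ∞) L)
    (X : Fin k → Phase k n → Phase k n)
    (hS : IsSOPDE X)
    (ψL : (Fin k → ℝ) → Phase k n) (hψL : ContDiff ℝ (⊤ : ℕ∞) ψL)
    (hint : IsIntegralSection X ψL) :
    (∀ t (j : Fin n) (A B : Fin k),
        pdR A (fun s => pdv j B L (ψL s)) t
          = pdt A (pdv j B L) (ψL t)
            + ∑ i, (ψL t).2.2 i A * pdq i (pdv j B L) (ψL t)
            + ∑ C, ∑ i, (X A (ψL t)).2.2 i C * pdv i C (pdv j B L) (ψL t)) ∧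
    IsIntegralSectionU
      (fun A m =>
        ((X A (lagPr m)).1, (X A (lagPr m)).2.1, (X A (lagPr m)).2.2,
          fun j B =>
            pdt A (pdv j B L) (lagPr m)
              + ∑ i, (lagPr m).2.2 i A * pdq i (pdv j B L) (lagPr m)
              + ∑ C, ∑ i, (X A (lagPr m)).2.2 i C * pdv i C (pdv j B L) (lagPr m)))
      (fun t => ((ψL t).1, (ψL t).2.1, (ψL t).2.2, fun j B => pdv j B L (ψL t))) := by
  have hψ : Differentiable ℝ ψL := hψL.differentiable (by simp)
  have hL2 : ContDiff ℝ 2 L := hL.of_le (by norm_cast)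
  have hflow := fun t (j : Fin n) (A B : Fin k) =>
    (hint.pdR_comp (hL2.differentiable_pdv j B (ψL t)) (hψ t) A).trans (hS.fderiv_apply _ _ A)
  have hmomenta : Differentiable ℝ fun s (j : Fin n) (B : Fin k) => pdv j B L (ψL s) :=
    differentiable_pi.2 fun j => differentiable_pi.2 fun B => (hL2.differentiable_pdv j B).comp hψ
  refine ⟨hflow, fun t A => ?_⟩
  rw [fderiv_prodMk_components_apply (hψ t) (hmomenta t), hint t A]
  refine Prod.ext rfl (Prod.ext rfl (Prod.ext rfl (funext fun j => funext fun B => ?_)))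
  exact (fderiv_apply_apply (hmomenta t) _ j B).trans (hflow t j A B)

/-- for any integral section `ψ_L` of a SOPDE `X`, the momenta
`ψ^B_j = (∂L/∂v^j_B) ∘ ψ_L` satisfy
`∂ψ^B_j/∂t^A = ∂²L/∂t^A∂v^j_B + Σ_i v^i_A ∂²L/∂q^i∂v^j_B + Σ_{i,C} (X_A)^i_C ∂²L/∂v^i_C∂v^j_B`
along `ψ_L`; consequently `(ψ_L, FL ∘ ψ_L)` is an integral section of the `k`-vector field
on the unified space whose `(t,q,v)`-components agree with those of `X_A` and whose
`p`-components are the bracketed expressions. -/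
theorem stmt11 {k n : ℕ} (L : Phase k n → ℝ) (hL : ContDiff ℝ (⊤ : ℕ∞) L)
    (X : Fin k → Phase k n → Phase k n) (hX : ∀ A, ContDiff ℝ (⊤ : ℕ∞) (X A))
    (hS : IsSOPDE X)
    (ψL : (Fin k → ℝ) → Phase k n) (hψL : ContDiff ℝ (⊤ : ℕ∞) ψL)
    (hint : IsIntegralSection X ψL) :
    (∀ t (j : Fin n) (A B : Fin k),
        pdR A (fun s => pdv j B L (ψL s)) t
          = pdt A (pdv j B L) (ψL t)
            + ∑ i, (ψL t).2.2 i A * pdq i (pdv j B L) (ψL t)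
            + ∑ C, ∑ i, (X A (ψL t)).2.2 i C * pdv i C (pdv j B L) (ψL t)) ∧
    IsIntegralSectionU
      (fun A m =>
        ((X A (lagPr m)).1, (X A (lagPr m)).2.1, (X A (lagPr m)).2.2,
          fun j B =>
            pdt A (pdv j B L) (lagPr m)
              + ∑ i, (lagPr m).2.2 i A * pdq i (pdv j B L) (lagPr m)
              + ∑ C, ∑ i, (X A (lagPr m)).2.2 i C * pdv i C (pdv j B L) (lagPr m)))
      (fun t => ((ψL t).1, (ψL t).2.1, (ψL t).2.2, fun j B => pdv j B L (ψL t))) :=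
  stmt11_general L hL X hS ψL hψL hint
end
end

section
/- Let L : ℝ^k × ℝ^n × ℝ^{nk} → ℝ be smooth and regular, let U be an open set on which the Legendre map FL is a diffeomorphism onto the open set FL(U), and let H : FL(U) → ℝ be the smooth function with H ∘ FL = E_L on U. Let X = (X_1, …, X_k) be a SOPDE on U with coefficients (X_A)^i_B satisfying at every point of U: Σ_B ∂²L/∂t^B∂v^i_B + Σ_{B,j} v^j_B · ∂²L/∂q^j∂v^i_B + Σ_{B,C,j} (X_B)^j_C · ∂²L/∂v^j_C∂v^i_B = ∂L/∂q^i. Define on FL(U) the pushforward k-vector field X_H with components ((X_H)_A)^B ∘ FL = δ^B_A, ((X_H)_A)^i ∘ FL = v^i_A, and ((X_H)_A)^B_j ∘ FL = ∂²L/∂t^A∂v^j_B + Σ_i v^i_A · ∂²L/∂q^i∂v^j_B + Σ_{i,C} (X_A)^i_C · ∂²L/∂v^i_C∂v^j_B. Then X_H satisfies the Hamilton component equations on FL(U): ((X_H)_A)^i = ∂H/∂p^A_i and Σ_{A=1}^k ((X_H)_A)^A_i = −∂H/∂q^i. -/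
noncomputable section

/-- The energy `E_L = Σ_{A,i} v^i_A ∂L/∂v^i_A − L`. -/
def energy {k n : ℕ} (L : Phase k n → ℝ) (p : Phase k n) : ℝ :=
  (∑ A, ∑ i, p.2.2 i A * pdv i A L p) - L p

/-- The Hessian of `L` with respect to the velocities, as an `nk × nk` matrix. -/
def hessV {k n : ℕ} (L : Phase k n → ℝ) (p : Phase k n) :
    Matrix (Fin n × Fin k) (Fin n × Fin k) ℝ :=
  Matrix.of fun a b => pdv a.1 a.2 (pdv b.1 b.2 L) p

/-- `L` is a regular Lagrangian: its velocity Hessian is invertible at every point. -/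
def Regular {k n : ℕ} (L : Phase k n → ℝ) : Prop :=
  ∀ p, IsUnit (hessV L p)

/-! Differentiating `H ∘ FL = E_L` in a direction `w` and cancelling the two occurrences of
`Σ w^i_A ∂L/∂v^i_A` gives
`dH(w_t, w_q, 0) + Σ d(∂L/∂v^i_A)(w) · (∂H/∂p^A_i ∘ FL - v^i_A) = -dL(w_t, w_q, 0)`.
In a velocity direction the outer terms vanish, so the velocity Hessian annihilates
`∂H/∂p ∘ FL - v`, which is therefore zero by regularity; a `q^i` direction then gives
`∂H/∂q^i ∘ FL = -∂L/∂q^i`. The first Hamilton equation follows from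
`(X_H)^i_A ∘ FL = v^i_A`; for the second, summing the defining formula of `((X_H)_A)^A_i` over `A` gives exactly the left
side of the Lagrangian equation. -/

section

variable {k n : ℕ}

lemma fderiv_apply_eq_add_sum_pdv (f : Phase k n → ℝ) (x w : Phase k n) :
    fderiv ℝ f x w = fderiv ℝ f x (w.1, w.2.1, 0) + ∑ i, ∑ A, w.2.2 i A * pdv i A f x := by
  have hw : w = (w.1, w.2.1, 0)
      + ∑ i, ∑ A, w.2.2 i A • ((0, 0, Pi.single i (Pi.single A 1)) : Phase k n) := by
    refine Prod.ext ?_ (Prod.ext ?_ ?_)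
    · simp [Prod.fst_sum]
    · simp [Prod.fst_sum, Prod.snd_sum]
    · ext i A
      simp [Prod.snd_sum, Finset.sum_apply, Pi.single_apply]
  conv_lhs => rw [hw]
  simp only [map_add, map_sum, map_smul, smul_eq_mul, pdv]

lemma differentiableAt_pdv {f : Phase k n → ℝ} {x : Phase k n}
    (hf : DifferentiableAt ℝ (fderiv ℝ f) x) (i : Fin n) (A : Fin k) :
    DifferentiableAt ℝ (pdv i A f) x :=
  hf.clm_apply (differentiableAt_const _)

lemma hasFDerivAt_FL {L : Phase k n → ℝ} {x : Phase k n}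
    (hL : DifferentiableAt ℝ (fderiv ℝ L) x) :
    HasFDerivAt (FL L) ((ContinuousLinearMap.fst ℝ _ _).prod
      (((ContinuousLinearMap.fst ℝ _ _).comp (ContinuousLinearMap.snd ℝ _ _)).prod
        (ContinuousLinearMap.pi fun i => ContinuousLinearMap.pi fun A =>
          fderiv ℝ (pdv i A L) x))) x :=
  hasFDerivAt_fst.prodMk ((hasFDerivAt_fst.comp x hasFDerivAt_snd).prodMk
    (hasFDerivAt_pi'' fun i => hasFDerivAt_pi'' fun A =>
      (differentiableAt_pdv hL i A).hasFDerivAt))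

lemma fderiv_energy_apply {L : Phase k n → ℝ} {x : Phase k n}
    (hL : DifferentiableAt ℝ L x) (hL' : DifferentiableAt ℝ (fderiv ℝ L) x) (w : Phase k n) :
    fderiv ℝ (energy L) x w = ∑ A, ∑ i, (pdv i A L x * w.2.2 i A
      + x.2.2 i A * fderiv ℝ (pdv i A L) x w) - fderiv ℝ L x w := by
  have hcoord : ∀ i A, HasFDerivAt (fun y : Phase k n => y.2.2 i A) _ x :=
    fun i A => ((ContinuousLinearMap.proj A).comp ((ContinuousLinearMap.proj i).comp
        ((ContinuousLinearMap.snd ℝ (Fin n → ℝ) (Fin n → Fin k → ℝ)).comp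
          (ContinuousLinearMap.snd ℝ (Fin k → ℝ) _))) : Phase k n →L[ℝ] ℝ).hasFDerivAt
  have h : HasFDerivAt (energy L) _ x :=
    (HasFDerivAt.fun_sum (u := Finset.univ) fun A _ => HasFDerivAt.fun_sum (u := Finset.univ)
      fun i _ => (hcoord i A).mul (differentiableAt_pdv hL' i A).hasFDerivAt).sub
      hL.hasFDerivAt
  rw [h.fderiv]
  simp [add_comm]

lemma fderiv_hamiltonian_add_sum_eq {L H : Phase k n → ℝ} {x : Phase k n}
    (hL : ContDiffAt ℝ 2 L x) (hH : DifferentiableAt ℝ H (FL L x))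
    (hHL : H ∘ FL L =ᶠ[nhds x] energy L) (w : Phase k n) :
    fderiv ℝ H (FL L x) (w.1, w.2.1, 0)
        + ∑ i, ∑ A, fderiv ℝ (pdv i A L) x w * (pdv i A H (FL L x) - x.2.2 i A)
      = - fderiv ℝ L x (w.1, w.2.1, 0) := by
  have hL₁ : DifferentiableAt ℝ L x := hL.differentiableAt (by norm_num)
  have hL₂ : DifferentiableAt ℝ (fderiv ℝ L) x :=
    (hL.fderiv_right (m := 1) (by norm_num)).differentiableAt (by norm_num)
  have hchain := DFunLike.congr_fun
    ((hH.hasFDerivAt.comp x (hasFDerivAt_FL hL₂)).congr_of_eventuallyEq hHL.symm).fderiv w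
  rw [fderiv_energy_apply hL₁ hL₂, fderiv_apply_eq_add_sum_pdv L x w,
    ContinuousLinearMap.comp_apply, fderiv_apply_eq_add_sum_pdv H, Finset.sum_comm] at hchain
  simp only [ContinuousLinearMap.prod_apply, ContinuousLinearMap.coe_fst',
    ContinuousLinearMap.coe_snd', ContinuousLinearMap.comp_apply, ContinuousLinearMap.pi_apply,
    mul_sub, Finset.sum_sub_distrib, Finset.sum_add_distrib] at hchain ⊢
  simp only [mul_comm] at hchain ⊢
  linarith

lemma pdv_hamiltonian_FL {L H : Phase k n → ℝ} {x : Phase k n}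
    (hL : ContDiffAt ℝ 2 L x) (hreg : IsUnit (hessV L x)) (hH : DifferentiableAt ℝ H (FL L x))
    (hHL : H ∘ FL L =ᶠ[nhds x] energy L) (i : Fin n) (A : Fin k) :
    pdv i A H (FL L x) = x.2.2 i A := by
  have hker : (hessV L x).mulVec (fun b => pdv b.1 b.2 H (FL L x) - x.2.2 b.1 b.2) = 0 := by
    ext ⟨j, B⟩
    have h := fderiv_hamiltonian_add_sum_eq hL hH hHL (0, 0, Pi.single j (Pi.single B 1))
    simp only [Prod.mk_zero_zero, map_zero, zero_add, neg_zero] at h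
    simpa [Matrix.mulVec, dotProduct, Fintype.sum_prod_type, hessV, pdv] using h
  exact sub_eq_zero.mp <| congrFun (Matrix.mulVec_injective_iff_isUnit.mpr hreg
    (hker.trans (Matrix.mulVec_zero _).symm)) (i, A)

lemma pdq_hamiltonian_FL {L H : Phase k n → ℝ} {x : Phase k n}
    (hL : ContDiffAt ℝ 2 L x) (hreg : IsUnit (hessV L x)) (hH : DifferentiableAt ℝ H (FL L x))
    (hHL : H ∘ FL L =ᶠ[nhds x] energy L) (i : Fin n) :
    pdq i H (FL L x) = - pdq i L x := by
  have h := fderiv_hamiltonian_add_sum_eq hL hH hHL (0, Pi.single i 1, 0)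
  simpa [pdv_hamiltonian_FL hL hreg hH hHL, pdq] using h

end

theorem stmt13_general {k n : ℕ} (L : Phase k n → ℝ) (hL : ContDiff ℝ (⊤ : ℕ∞) L)
    (hreg : Regular L)
    (U : Set (Phase k n)) (hU : IsOpen U) (hFLU : IsOpen (FL L '' U))
    (H : Phase k n → ℝ) (hH : ContDiffOn ℝ (⊤ : ℕ∞) H (FL L '' U))
    (hHL : ∀ p ∈ U, H (FL L p) = energy L p)
    -- `X` is a SOPDE on `U` …
    (X : Fin k → Phase k n → Phase k n)
    -- … whose coefficients satisfy the Lagrangian component equations on `U`: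
    (hXEL : ∀ p ∈ U, ∀ i : Fin n,
      (∑ B, pdt B (pdv i B L) p)
        + (∑ B, ∑ j, p.2.2 j B * pdq j (pdv i B L) p)
        + (∑ B, ∑ C, ∑ j, (X B p).2.2 j C * pdv j C (pdv i B L) p)
      = pdq i L p)
    -- the pushforward `k`-vector field `X_H` on `FL(U)`:
    (XH : Fin k → Phase k n → Phase k n)
    (hXHq : ∀ A, ∀ p ∈ U, ∀ i : Fin n, (XH A (FL L p)).2.1 i = p.2.2 i A)
    (hXHp : ∀ A, ∀ p ∈ U, ∀ (j : Fin n) (B : Fin k),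
      (XH A (FL L p)).2.2 j B
        = pdt A (pdv j B L) p
          + ∑ i, p.2.2 i A * pdq i (pdv j B L) p
          + ∑ C, ∑ i, (X A p).2.2 i C * pdv i C (pdv j B L) p) :
    ∀ q ∈ FL L '' U,
      (∀ (A : Fin k) (i : Fin n), (XH A q).2.1 i = pdv i A H q) ∧
      (∀ i : Fin n, ∑ A, (XH A q).2.2 i A = - pdq i H q) := by
  rintro q ⟨p, hp, rfl⟩
  have hL₂ : ContDiffAt ℝ 2 L p := hL.contDiffAt.of_le (by norm_cast)
  have hH₁ : DifferentiableAt ℝ H (FL L p) :=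
    (hH.contDiffAt (hFLU.mem_nhds ⟨p, hp, rfl⟩)).differentiableAt (by simp)
  have hHL' : H ∘ FL L =ᶠ[nhds p] energy L := Filter.eventuallyEq_of_mem (hU.mem_nhds hp) hHL
  refine ⟨fun A i => ?_, fun i => ?_⟩
  · rw [hXHq A p hp i, pdv_hamiltonian_FL hL₂ (hreg p) hH₁ hHL']
  · rw [pdq_hamiltonian_FL hL₂ (hreg p) hH₁ hHL', neg_neg, ← hXEL p hp i,
      Finset.sum_congr rfl fun A _ => hXHp A p hp i A, Finset.sum_add_distrib,
      Finset.sum_add_distrib]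

/-- the pushforward under the Legendre map of a SOPDE solution of the
Lagrangian component equations satisfies the Hamilton component equations on `FL(U)`. -/
theorem stmt13 {k n : ℕ} (L : Phase k n → ℝ) (hL : ContDiff ℝ (⊤ : ℕ∞) L)
    (hreg : Regular L)
    (U : Set (Phase k n)) (hU : IsOpen U) (hFLU : IsOpen (FL L '' U))
    (G : Phase k n → Phase k n) (hG : ContDiffOn ℝ (⊤ : ℕ∞) G (FL L '' U))
    (hGl : ∀ p ∈ U, G (FL L p) = p) (hGr : ∀ q ∈ FL L '' U, FL L (G q) = q)
    (H : Phase k n → ℝ) (hH : ContDiffOn ℝ (⊤ : ℕ∞) H (FL L '' U))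
    (hHL : ∀ p ∈ U, H (FL L p) = energy L p)
    -- `X` is a SOPDE on `U` …
    (X : Fin k → Phase k n → Phase k n) (hX : ∀ A, ContDiff ℝ (⊤ : ℕ∞) (X A))
    (hXt : ∀ A, ∀ p ∈ U, (X A p).1 = Pi.single A 1)
    (hXq : ∀ A, ∀ p ∈ U, ∀ i : Fin n, (X A p).2.1 i = p.2.2 i A)
    -- … whose coefficients satisfy the Lagrangian component equations on `U`:
    (hXEL : ∀ p ∈ U, ∀ i : Fin n,
      (∑ B, pdt B (pdv i B L) p)
        + (∑ B, ∑ j, p.2.2 j B * pdq j (pdv i B L) p)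
        + (∑ B, ∑ C, ∑ j, (X B p).2.2 j C * pdv j C (pdv i B L) p)
      = pdq i L p)
    -- the pushforward `k`-vector field `X_H` on `FL(U)`:
    (XH : Fin k → Phase k n → Phase k n) (hXH : ∀ A, ContDiff ℝ (⊤ : ℕ∞) (XH A))
    (hXHt : ∀ A, ∀ p ∈ U, (XH A (FL L p)).1 = Pi.single A 1)
    (hXHq : ∀ A, ∀ p ∈ U, ∀ i : Fin n, (XH A (FL L p)).2.1 i = p.2.2 i A)
    (hXHp : ∀ A, ∀ p ∈ U, ∀ (j : Fin n) (B : Fin k),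
      (XH A (FL L p)).2.2 j B
        = pdt A (pdv j B L) p
          + ∑ i, p.2.2 i A * pdq i (pdv j B L) p
          + ∑ C, ∑ i, (X A p).2.2 i C * pdv i C (pdv j B L) p) :
    ∀ q ∈ FL L '' U,
      (∀ (A : Fin k) (i : Fin n), (XH A q).2.1 i = pdv i A H q) ∧
      (∀ i : Fin n, ∑ A, (XH A q).2.2 i A = - pdq i H q) :=
  stmt13_general L hL hreg U hU hFLU H hH hHL X hXEL XH hXHq hXHp
end
end
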